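/- Assume ζ_3 ≠ ζ_4 and let λ ∈ F. Set Γ_{1234} = Φ_{1234} + λ ζ_{13} ζ_{14} ζ_{23} ζ_{24} ζ_{34} a_{134} a_{234}. Then ∬ exp(Γ_{1234}) db^{(1)} db^{(2)} = g_{1234} = f_{1234} + λ (∏_{1≤i<j≤4} ζ_{ij}) a_{123} a_{124} a_{134} a_{234} (integration over b^{(1)} first, then b^{(2)}). -/

import Mathlib

/-!  Context: a Grassmann algebra `Λ` over a field `F` of characteristic ≠ 2, with
anticommuting generators indexed by a type `ι` (for us: the (3-element) subsets
`S ⊆ Fin 5`, possibly together with extra generators `b`).  Vertex `k ∈ {1,…,5}`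
of the paper corresponds to `k - 1 : Fin 5`, so `ζ_{ij} = ζ (i-1) - ζ (j-1)`.
The Berezin integral in a generator is axiomatized by the predicate `IsBerezin`. -/

/-- The subalgebra of elements not involving the generator `e i`, i.e. the
subalgebra generated by all the other generators. -/
def notInvolving (F : Type*) [Field F] {Λ : Type*} [Ring Λ] [Algebra F Λ]
    {ι : Type*} (e : ι → Λ) (i : ι) : Subalgebra F Λ :=
  Algebra.adjoin F { x | ∃ j, j ≠ i ∧ x = e j }

/-- `B` is the Berezin integral with respect to the generator `e i`: it is `F`-linear
and, writing `x = g + h * e i` with `g`, `h` not involving `e i` (the generator moved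
to the rightmost position), one has `B x = h`.  Equivalently: `B g = 0` and
`B (h * e i) = h` for `g`, `h` not involving `e i`. -/
def IsBerezin (F : Type*) [Field F] {Λ : Type*} [Ring Λ] [Algebra F Λ]
    {ι : Type*} (e : ι → Λ) (i : ι) (B : Λ →ₗ[F] Λ) : Prop :=
  (∀ g ∈ notInvolving F e i, B g = 0) ∧
  (∀ h ∈ notInvolving F e i, B (h * e i) = h)

/-- The tetrahedron weight `f_{i₁i₂i₃i₄}` (formula (1) of the paper), where
`a S` is the Grassmann generator attached to the unoriented 2-face `S`. -/
def fw {F : Type*} [Field F] {Λ : Type*} [Ring Λ] [Algebra F Λ]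
    (ζ : Fin 5 → F) (a : Finset (Fin 5) → Λ) (i₁ i₂ i₃ i₄ : Fin 5) : Λ :=
  (ζ i₁ - ζ i₂) • (a {i₁, i₂, i₃} * a {i₁, i₂, i₄})
    - (ζ i₁ - ζ i₃) • (a {i₁, i₂, i₃} * a {i₁, i₃, i₄})
    + (ζ i₁ - ζ i₄) • (a {i₁, i₂, i₄} * a {i₁, i₃, i₄})
    + (ζ i₂ - ζ i₃) • (a {i₁, i₂, i₃} * a {i₂, i₃, i₄})
    - (ζ i₂ - ζ i₄) • (a {i₁, i₂, i₄} * a {i₂, i₃, i₄})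
    + (ζ i₃ - ζ i₄) • (a {i₁, i₃, i₄} * a {i₂, i₃, i₄})

/-- `c_{i₁i₂i₃i₄} = ∏_{1 ≤ k < l ≤ 4} ζ_{i_k i_l}`. -/
def cc {F : Type*} [Field F] (ζ : Fin 5 → F) (i₁ i₂ i₃ i₄ : Fin 5) : F :=
  (ζ i₁ - ζ i₂) * (ζ i₁ - ζ i₃) * (ζ i₁ - ζ i₄) * (ζ i₂ - ζ i₃) * (ζ i₂ - ζ i₄) * (ζ i₃ - ζ i₄)

/-- The deformed weight `g_{i₁i₂i₃i₄} = f_{i₁i₂i₃i₄} + ε λ c_{i₁i₂i₃i₄}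
a_{i₁i₂i₃} a_{i₁i₂i₄} a_{i₁i₃i₄} a_{i₂i₃i₄}`, with orientation sign `eps = ε_{i₁i₂i₃i₄}`. -/
def gw {F : Type*} [Field F] {Λ : Type*} [Ring Λ] [Algebra F Λ]
    (ζ : Fin 5 → F) (a : Finset (Fin 5) → Λ) (lam eps : F) (i₁ i₂ i₃ i₄ : Fin 5) : Λ :=
  fw ζ a i₁ i₂ i₃ i₄ +
    (eps * lam * cc ζ i₁ i₂ i₃ i₄) •
      (a {i₁, i₂, i₃} * a {i₁, i₂, i₄} * a {i₁, i₃, i₄} * a {i₂, i₃, i₄})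

/-- The (terminating) Taylor series of the exponential of a nilpotent element:
`exp x = Σ_{n < N} xⁿ/n!`, where `N` is any bound with `x ^ N = 0`. -/
def expT (F : Type*) [Field F] {Λ : Type*} [Ring Λ] [Algebra F Λ] (N : ℕ) (x : Λ) : Λ :=
  ∑ n ∈ Finset.range N, ((n.factorial : F))⁻¹ • x ^ n

/-- The bilinear form `Φ_{i₁i₂i₃i₄}` (formula (6) of the paper):
`Φ = b⁽¹⁾(ζ_{i₂i₃} a_{i₁i₂i₃} − ζ_{i₂i₄} a_{i₁i₂i₄} + ζ_{i₃i₄} a_{i₁i₃i₄})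
   + b⁽²⁾((ζ_{i₁i₃}/ζ_{i₃i₄}) a_{i₁i₂i₃} − (ζ_{i₁i₄}/ζ_{i₃i₄}) a_{i₁i₂i₄} + a_{i₂i₃i₄})`,
where `e (Sum.inl S) = a_S` and `e (Sum.inr b₁)`, `e (Sum.inr b₂)` are the two
extra generators `b⁽¹⁾`, `b⁽²⁾` attached to the tetrahedron. -/
def PhiT {F : Type*} [Field F] {Λ : Type*} [Ring Λ] [Algebra F Λ] {β : Type*}
    (ζ : Fin 5 → F) (e : Finset (Fin 5) ⊕ β → Λ) (b₁ b₂ : β) (i₁ i₂ i₃ i₄ : Fin 5) : Λ :=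
  e (Sum.inr b₁) *
      ((ζ i₂ - ζ i₃) • e (Sum.inl {i₁, i₂, i₃}) - (ζ i₂ - ζ i₄) • e (Sum.inl {i₁, i₂, i₄})
        + (ζ i₃ - ζ i₄) • e (Sum.inl {i₁, i₃, i₄}))
    + e (Sum.inr b₂) *
      (((ζ i₁ - ζ i₃) / (ζ i₃ - ζ i₄)) • e (Sum.inl {i₁, i₂, i₃})
        - ((ζ i₁ - ζ i₄) / (ζ i₃ - ζ i₄)) • e (Sum.inl {i₁, i₂, i₄})
        + e (Sum.inl {i₂, i₃, i₄}))

/-! Write `Γ = b⁽¹⁾X + b⁽²⁾Y + Z` with `X`, `Y` linear and `Z = κ a₁₃₄ a₂₃₄` quadratic in the `a_S`.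
The three even summands commute and square to zero, so `exp Γ` stops at `Γ³/3!`, and the double
Berezin integral picks out its `b⁽¹⁾b⁽²⁾`-component `b⁽¹⁾b⁽²⁾ Y X (1 + Z)`, giving `-Y X (1 + Z)`.
Expanding, `-Y X = f₁₂₃₄`, while `Y X a₁₃₄ a₂₃₄` only retains the `a₁₂₃ a₁₂₄`-part of `Y X`, which
is `-ζ₁₂ a₁₂₃ a₁₂₄` since `ζ₁₄ζ₂₃ - ζ₁₃ζ₂₄ = -ζ₁₂ζ₃₄`. -/

open Submodule

section Parity

variable {Λ : Type*} [Ring Λ] {x y z w P Q Z : Λ}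

theorem commute_mul_of_anticomm (hx : x * w = -(w * x)) (hy : y * w = -(w * y)) :
    Commute (x * y) w := by
  rw [Commute, SemiconjBy, mul_assoc, hy, mul_neg, ← mul_assoc, hx, neg_mul, neg_neg, mul_assoc]

theorem mul_anticomm_of_anticomm_of_commute (hx : x * w = -(w * x)) (hz : Commute z w) :
    x * z * w = -(w * (x * z)) := by
  rw [mul_assoc, hz.eq, ← mul_assoc, hx, neg_mul, mul_assoc]

theorem mul_mul_self_eq_zero_of_anticomm (hx : x * x = 0) (hyx : y * x = -(x * y)) :
    x * y * (x * y) = 0 := by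
  rw [mul_assoc, ← mul_assoc y, hyx, neg_mul, mul_neg, ← mul_assoc, ← mul_assoc, hx, zero_mul,
    zero_mul, neg_zero]

theorem left_comm_of_anticomm (h : x * w = -(w * x)) (t : Λ) :
    x * (w * t) = -(w * (x * t)) := by
  rw [← mul_assoc, h, neg_mul, mul_assoc]

theorem mul_mul_eq_zero_of_mul_self (h : w * w = 0) (t : Λ) : w * (w * t) = 0 := by
  rw [← mul_assoc, h, zero_mul]

theorem add_add_sq_of_commute (hPQ : Commute P Q) (hPZ : Commute P Z) (hQZ : Commute Q Z)
    (hP : P * P = 0) (hQ : Q * Q = 0) (hZ : Z * Z = 0) :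
    (P + Q + Z) ^ 2 = 2 • (P * Q + P * Z + Q * Z) := by
  simp only [sq, add_mul, mul_add, hPQ.symm.eq, hPZ.symm.eq, hQZ.symm.eq, hP, hQ, hZ]
  abel

theorem add_add_cube_of_commute (hPQ : Commute P Q) (hPZ : Commute P Z) (hQZ : Commute Q Z)
    (hP : P * P = 0) (hQ : Q * Q = 0) (hZ : Z * Z = 0) :
    (P + Q + Z) ^ 3 = 6 • (P * Q * Z) := by
  simp only [pow_succ, pow_zero, one_mul, add_mul, mul_add, mul_assoc, hPQ.symm.eq,
    hPZ.symm.eq, hQZ.symm.eq, hPQ.symm.left_comm, hP, hQ, hZ, mul_mul_eq_zero_of_mul_self hP,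
    mul_mul_eq_zero_of_mul_self hQ, mul_zero, add_zero, zero_add]
  abel

end Parity

theorem inv_factorial_smul_pow {F : Type*} [Field F] {Λ : Type*} [Ring Λ] [Algebra F Λ]
    {n : ℕ} (hn : (n.factorial : F) ≠ 0) {x y : Λ} (h : x ^ n = n.factorial • y) :
    ((n.factorial : F))⁻¹ • x ^ n = y := by
  rw [h, ← Nat.cast_smul_eq_nsmul F, inv_smul_smul₀ hn]

theorem expT_four_eq {F : Type*} [Field F] {Λ : Type*} [Ring Λ] [Algebra F Λ]
    (hfac : ∀ n < 4, (n.factorial : F) ≠ 0) {x y z : Λ} (h₂ : x ^ 2 = 2 • y)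
    (h₃ : x ^ 3 = 6 • z) : expT F 4 x = 1 + x + y + z := by
  rw [expT, Finset.sum_range_succ, Finset.sum_range_succ, Finset.sum_range_succ,
    Finset.sum_range_one, inv_factorial_smul_pow (hfac 2 (by norm_num)) h₂,
    inv_factorial_smul_pow (hfac 3 (by norm_num)) h₃]
  simp

theorem expT_gaussian_eq {F : Type*} [Field F] {Λ : Type*} [Ring Λ] [Algebra F Λ]
    (hfac : ∀ n < 4, (n.factorial : F) ≠ 0) {s : Set Λ} (odd : ∀ u ∈ s, ∀ v ∈ s, u * v = -(v * u))
    (hsq : ∀ u ∈ s, u * u = 0) {b₁ b₂ X Y p q : Λ} (hb₁ : b₁ ∈ s) (hb₂ : b₂ ∈ s) (hX : X ∈ s)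
    (hY : Y ∈ s) (hp : p ∈ s) (hq : q ∈ s) :
    expT F 4 (b₁ * X + b₂ * Y + p * q) = (1 + p * q + b₂ * (Y * (1 + p * q)))
      + b₁ * (X * (1 + p * q)) + b₁ * (b₂ * (Y * X * (1 + p * q))) := by
  have even : ∀ {x y}, x ∈ s → y ∈ s → ∀ u ∈ s, Commute (x * y) u :=
    fun hx hy u hu => commute_mul_of_anticomm (odd _ hx u hu) (odd _ hy u hu)
  have hPQ := (even hb₁ hX _ hb₂).mul_right (even hb₁ hX _ hY)
  have hPZ := (even hb₁ hX _ hp).mul_right (even hb₁ hX _ hq)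
  have hQZ := (even hb₂ hY _ hp).mul_right (even hb₂ hY _ hq)
  have hP0 := mul_mul_self_eq_zero_of_anticomm (hsq _ hb₁) (odd _ hX _ hb₁)
  have hQ0 := mul_mul_self_eq_zero_of_anticomm (hsq _ hb₂) (odd _ hY _ hb₂)
  have hZ0 := mul_mul_self_eq_zero_of_anticomm (hsq _ hp) (odd _ hq _ hp)
  have hb₁Xb₂Y : b₁ * X * (b₂ * Y) = b₁ * (b₂ * (Y * X)) := by
    rw [mul_assoc, ← mul_assoc X, odd _ hX _ hb₂, neg_mul, mul_assoc, odd _ hX _ hY, mul_neg,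
      mul_neg, mul_neg, neg_neg]
  rw [expT_four_eq hfac (add_add_sq_of_commute hPQ hPZ hQZ hP0 hQ0 hZ0)
    (add_add_cube_of_commute hPQ hPZ hQZ hP0 hQ0 hZ0), hb₁Xb₂Y]
  simp only [mul_add, mul_one, mul_assoc]
  abel

section Anticommuting

variable {F : Type*} [Field F] {Λ : Type*} [Ring Λ] [Algebra F Λ]

theorem mul_eq_neg_mul_of_mem_span {s : Set Λ} {w : Λ} (hs : ∀ x ∈ s, x * w = -(w * x))
    {u : Λ} (hu : u ∈ span F s) : u * w = -(w * u) := by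
  induction hu using Submodule.span_induction with
  | mem x hx => exact hs x hx
  | zero => simp
  | add x y _ _ hx hy => rw [add_mul, mul_add, hx, hy, neg_add]
  | smul c x _ hx => rw [smul_mul_assoc, mul_smul_comm, hx, smul_neg]

variable {ι : Type*} {e : ι → Λ}

theorem mul_eq_neg_mul_of_mem_span_range (hanti : ∀ i j, e i * e j = -(e j * e i))
    {u v : Λ} (hu : u ∈ span F (Set.range e)) (hv : v ∈ span F (Set.range e)) :
    u * v = -(v * u) := by
  refine mul_eq_neg_mul_of_mem_span (fun x hx => ?_) hu
  obtain ⟨i, rfl⟩ := hx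
  rw [mul_eq_neg_mul_of_mem_span (fun x hx => ?_) hv, neg_neg]
  obtain ⟨j, rfl⟩ := hx
  exact hanti j i

theorem mul_self_eq_zero_of_mem_span_range (hanti : ∀ i j, e i * e j = -(e j * e i))
    (hsq : ∀ i, e i * e i = 0) {u : Λ} (hu : u ∈ span F (Set.range e)) : u * u = 0 := by
  induction hu using Submodule.span_induction with
  | mem x hx => obtain ⟨i, rfl⟩ := hx; exact hsq i
  | zero => simp
  | add x y hx' hy' hx hy =>
    rw [add_mul, mul_add, mul_add, hx, hy, mul_eq_neg_mul_of_mem_span_range hanti hx' hy']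
    abel
  | smul c x _ hx => rw [smul_mul_assoc, mul_smul_comm, hx, smul_zero, smul_zero]

end Anticommuting

section Berezin

variable {F : Type*} [Field F] {Λ : Type*} [Ring Λ] [Algebra F Λ] {ι : Type*} {e : ι → Λ}

theorem gen_mem_notInvolving {i j : ι} (h : j ≠ i) : e j ∈ notInvolving F e i :=
  Algebra.subset_adjoin ⟨j, h, rfl⟩

theorem span_image_le_notInvolving {s : Set ι} {i : ι} (hi : i ∉ s) :
    span F (e '' s) ≤ Subalgebra.toSubmodule (notInvolving F e i) :=
  span_le.mpr <| by
    rintro _ ⟨j, hj, rfl⟩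
    exact gen_mem_notInvolving (ne_of_mem_of_not_mem hj hi)

namespace IsBerezin

variable {i : ι} {B : Λ →ₗ[F] Λ}

theorem map_gen_mul_of_commute (hB : IsBerezin F e i B) {u : Λ} (hu : u ∈ notInvolving F e i)
    (hc : u * e i = e i * u) : B (e i * u) = u := by
  rw [← hc, hB.2 u hu]

theorem map_gen_mul_of_anticomm (hB : IsBerezin F e i B) {u : Λ}
    (hu : u ∈ notInvolving F e i) (hc : u * e i = -(e i * u)) : B (e i * u) = -u := by
  rw [← neg_neg (e i * u), ← hc, ← neg_mul, hB.2 _ (neg_mem hu)]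

theorem map_map_eq_neg {j : ι} {B' : Λ →ₗ[F] Λ} (hB : IsBerezin F e i B)
    (hB' : IsBerezin F e j B') (hij : e j * e i = -(e i * e j))
    (hj : e j ∈ notInvolving F e i) {g u w : Λ}
    (hg : g ∈ notInvolving F e i)
    (hu : u ∈ notInvolving F e i) (hu' : u ∈ notInvolving F e j) (hui : u * e i = -(e i * u))
    (hw : w ∈ notInvolving F e i) (hw' : w ∈ notInvolving F e j)
    (hwi : w * e i = e i * w) (hwj : w * e j = e j * w) :
    B' (B (g + e i * u + e i * (e j * w))) = -w := by
  have hjw : e j * w * e i = -(e i * (e j * w)) := by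
    rw [mul_assoc, hwi, ← mul_assoc, hij, neg_mul, mul_assoc]
  rw [map_add B, map_add B, hB.1 g hg, hB.map_gen_mul_of_anticomm hu hui,
    hB.map_gen_mul_of_anticomm (mul_mem hj hw) (by rw [hjw]), zero_add, ← neg_add, map_neg,
    map_add, hB'.1 u hu', hB'.map_gen_mul_of_commute hw' hwj, zero_add]

end IsBerezin

end Berezin

theorem berezin_berezin_expT_gaussian {F : Type*} [Field F] {Λ : Type*} [Ring Λ] [Algebra F Λ]
    (hfac : ∀ n < 4, (n.factorial : F) ≠ 0) {ι : Type*} {e : ι → Λ}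
    (hanti : ∀ i j, e i * e j = -(e j * e i)) (hsq : ∀ i, e i * e i = 0) {i j : ι} (hij : i ≠ j)
    {B₁ B₂ : Λ →ₗ[F] Λ} (hB₁ : IsBerezin F e i B₁) (hB₂ : IsBerezin F e j B₂) {X Y p q : Λ}
    (hX : X ∈ span F (e '' {i, j}ᶜ)) (hY : Y ∈ span F (e '' {i, j}ᶜ))
    (hp : p ∈ span F (e '' {i, j}ᶜ)) (hq : q ∈ span F (e '' {i, j}ᶜ)) :
    B₂ (B₁ (expT F 4 (e i * X + e j * Y + p * q))) = -(Y * X * (1 + p * q)) := by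
  have hV : span F (e '' {i, j}ᶜ) ≤ span F (Set.range e) := span_mono (Set.image_subset_range _ _)
  have odd : ∀ u ∈ span F (Set.range e), ∀ v ∈ span F (Set.range e), u * v = -(v * u) :=
    fun u hu v hv => mul_eq_neg_mul_of_mem_span_range hanti hu hv
  have gen : ∀ k, e k ∈ span F (Set.range e) := fun k => subset_span ⟨k, rfl⟩
  have hZ1 : ∀ u ∈ span F (Set.range e), Commute (1 + p * q) u := fun u hu =>
    (Commute.one_left u).add_left
      (commute_mul_of_anticomm (odd _ (hV hp) u hu) (odd _ (hV hq) u hu))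
  have hYX1 : ∀ u ∈ span F (Set.range e), Commute (Y * X * (1 + p * q)) u := fun u hu =>
    (commute_mul_of_anticomm (odd _ (hV hY) u hu) (odd _ (hV hX) u hu)).mul_left (hZ1 u hu)
  have hN : ∀ k ∈ ({i, j} : Set ι), ∀ x ∈ span F (e '' {i, j}ᶜ), x ∈ notInvolving F e k :=
    fun k hk x hx => span_image_le_notInvolving (Set.notMem_compl_iff.mpr hk) hx
  have hN1Z : ∀ k ∈ ({i, j} : Set ι), 1 + p * q ∈ notInvolving F e k :=
    fun k hk => add_mem (one_mem _) (mul_mem (hN k hk p hp) (hN k hk q hq))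
  have hNu : ∀ k ∈ ({i, j} : Set ι), X * (1 + p * q) ∈ notInvolving F e k :=
    fun k hk => mul_mem (hN k hk X hX) (hN1Z k hk)
  have hNw : ∀ k ∈ ({i, j} : Set ι), Y * X * (1 + p * q) ∈ notInvolving F e k :=
    fun k hk => mul_mem (mul_mem (hN k hk Y hY) (hN k hk X hX)) (hN1Z k hk)
  have hji := gen_mem_notInvolving (F := F) (e := e) hij.symm
  rw [expT_gaussian_eq hfac odd (fun u hu => mul_self_eq_zero_of_mem_span_range hanti hsq hu)
    (gen i) (gen j) (hV hX) (hV hY) (hV hp) (hV hq)]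
  exact hB₁.map_map_eq_neg hB₂ (hanti j i) hji
    (add_mem (hN1Z i (by simp)) (mul_mem hji (mul_mem (hN i (by simp) Y hY) (hN1Z i (by simp)))))
    (hNu i (by simp)) (hNu j (by simp))
    (mul_anticomm_of_anticomm_of_commute (odd _ (hV hX) _ (gen i)) (hZ1 _ (gen i)))
    (hNw i (by simp)) (hNw j (by simp)) (hYX1 _ (gen i)).eq (hYX1 _ (gen j)).eq

section Tetrahedron

variable {F : Type*} [Field F] {Λ : Type*} [Ring Λ] [Algebra F Λ]

def PhiT.coeff₁ (ζ : Fin 5 → F) (a : Finset (Fin 5) → Λ) (i₁ i₂ i₃ i₄ : Fin 5) : Λ :=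
  (ζ i₂ - ζ i₃) • a {i₁, i₂, i₃} - (ζ i₂ - ζ i₄) • a {i₁, i₂, i₄} + (ζ i₃ - ζ i₄) • a {i₁, i₃, i₄}

def PhiT.coeff₂ (ζ : Fin 5 → F) (a : Finset (Fin 5) → Λ) (i₁ i₂ i₃ i₄ : Fin 5) : Λ :=
  ((ζ i₁ - ζ i₃) / (ζ i₃ - ζ i₄)) • a {i₁, i₂, i₃}
    - ((ζ i₁ - ζ i₄) / (ζ i₃ - ζ i₄)) • a {i₁, i₂, i₄} + a {i₂, i₃, i₄}

variable (ζ : Fin 5 → F) (i₁ i₂ i₃ i₄ : Fin 5)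

theorem PhiT_eq {β : Type*} (e : Finset (Fin 5) ⊕ β → Λ) (b₁ b₂ : β) :
    PhiT ζ e b₁ b₂ i₁ i₂ i₃ i₄ = e (.inr b₁) * PhiT.coeff₁ ζ (fun S => e (.inl S)) i₁ i₂ i₃ i₄
      + e (.inr b₂) * PhiT.coeff₂ ζ (fun S => e (.inl S)) i₁ i₂ i₃ i₄ :=
  rfl

variable {ζ i₁ i₂ i₃ i₄} {a : Finset (Fin 5) → Λ}

theorem PhiT.coeff₁_mem {W : Submodule F Λ} (ha : ∀ S, a S ∈ W) :
    PhiT.coeff₁ ζ a i₁ i₂ i₃ i₄ ∈ W :=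
  add_mem (sub_mem (W.smul_mem _ (ha _)) (W.smul_mem _ (ha _))) (W.smul_mem _ (ha _))

theorem PhiT.coeff₂_mem {W : Submodule F Λ} (ha : ∀ S, a S ∈ W) :
    PhiT.coeff₂ ζ a i₁ i₂ i₃ i₄ ∈ W :=
  add_mem (sub_mem (W.smul_mem _ (ha _)) (W.smul_mem _ (ha _))) (ha _)

variable (hanti : ∀ S T, a S * a T = -(a T * a S)) (hsq : ∀ S, a S * a S = 0)
include hanti hsq

theorem fw_eq_neg_coeff₂_mul_coeff₁ (h34 : ζ i₃ ≠ ζ i₄) :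
    fw ζ a i₁ i₂ i₃ i₄ = -(PhiT.coeff₂ ζ a i₁ i₂ i₃ i₄ * PhiT.coeff₁ ζ a i₁ i₂ i₃ i₄) := by
  have h34' : ζ i₃ - ζ i₄ ≠ 0 := sub_ne_zero_of_ne h34
  simp only [fw, PhiT.coeff₁, PhiT.coeff₂, add_mul, sub_mul, mul_add, mul_sub, smul_mul_assoc,
    mul_smul_comm, hsq, hanti {i₁, i₂, i₄} {i₁, i₂, i₃}, hanti {i₂, i₃, i₄} {i₁, i₂, i₃},
    hanti {i₂, i₃, i₄} {i₁, i₂, i₄}, hanti {i₂, i₃, i₄} {i₁, i₃, i₄}]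
  match_scalars <;> field_simp
  ring

theorem coeff₂_mul_coeff₁_mul_eq (h34 : ζ i₃ ≠ ζ i₄) :
    PhiT.coeff₂ ζ a i₁ i₂ i₃ i₄ * PhiT.coeff₁ ζ a i₁ i₂ i₃ i₄ * (a {i₁, i₃, i₄} * a {i₂, i₃, i₄}) =
      (ζ i₂ - ζ i₁) • (a {i₁, i₂, i₃} * a {i₁, i₂, i₄} * a {i₁, i₃, i₄} * a {i₂, i₃, i₄}) := by
  have h34' : ζ i₃ - ζ i₄ ≠ 0 := sub_ne_zero_of_ne h34
  simp only [PhiT.coeff₁, PhiT.coeff₂, add_mul, sub_mul, mul_add, mul_sub, smul_mul_assoc,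
    mul_smul_comm, smul_smul, mul_assoc, hsq, mul_mul_eq_zero_of_mul_self (hsq _),
    hanti {i₁, i₂, i₄} {i₁, i₂, i₃}, hanti {i₂, i₃, i₄} {i₁, i₂, i₃},
    hanti {i₂, i₃, i₄} {i₁, i₂, i₄}, hanti {i₂, i₃, i₄} {i₁, i₃, i₄},
    left_comm_of_anticomm (hanti {i₂, i₃, i₄} {i₁, i₃, i₄}), neg_mul, mul_zero, zero_mul,
    neg_zero, smul_zero, add_zero, sub_zero]
  match_scalars
  field_simp
  ring

theorem gw_eq_neg_coeff₂_mul_coeff₁_mul (h34 : ζ i₃ ≠ ζ i₄) (lam : F) :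
    gw ζ a lam 1 i₁ i₂ i₃ i₄ = -(PhiT.coeff₂ ζ a i₁ i₂ i₃ i₄ * PhiT.coeff₁ ζ a i₁ i₂ i₃ i₄ *
      (1 + ((lam * ((ζ i₁ - ζ i₃) * (ζ i₁ - ζ i₄) * (ζ i₂ - ζ i₃) * (ζ i₂ - ζ i₄) *
        (ζ i₃ - ζ i₄))) • a {i₁, i₃, i₄}) * a {i₂, i₃, i₄})) := by
  rw [mul_add, mul_one, smul_mul_assoc, mul_smul_comm,
    coeff₂_mul_coeff₁_mul_eq hanti hsq h34, neg_add, ← fw_eq_neg_coeff₂_mul_coeff₁ hanti hsq h34,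
    gw, cc, smul_smul, ← neg_smul]
  congr 2
  ring

end Tetrahedron

theorem gaussian_g_general
    {F : Type*} [Field F] {Λ : Type*} [Ring Λ] [Algebra F Λ]
    (ζ : Fin 5 → F)
    (hfac : ∀ n < 4, (n.factorial : F) ≠ 0)
    (h34 : ζ 2 ≠ ζ 3) (lam : F)
    (e : Finset (Fin 5) ⊕ Fin 2 → Λ)
    (hanti : ∀ i j, e i * e j = -(e j * e i))
    (hsq : ∀ i, e i * e i = 0)
    (B1 B2 : Λ →ₗ[F] Λ)
    (hB1 : IsBerezin F e (Sum.inr 0) B1)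
    (hB2 : IsBerezin F e (Sum.inr 1) B2) :
    B2 (B1 (expT F 4
        (PhiT ζ e 0 1 0 1 2 3 +
          (lam * ((ζ 0 - ζ 2) * (ζ 0 - ζ 3) * (ζ 1 - ζ 2) * (ζ 1 - ζ 3) * (ζ 2 - ζ 3))) •
            (e (Sum.inl {0, 2, 3}) * e (Sum.inl {1, 2, 3}))))) =
      gw ζ (fun S => e (Sum.inl S)) lam 1 0 1 2 3 := by
  have ha : ∀ S, e (.inl S) ∈ span F (e '' {.inr 0, .inr 1}ᶜ) :=
    fun S => subset_span ⟨.inl S, by simp, rfl⟩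
  rw [PhiT_eq, ← smul_mul_assoc, berezin_berezin_expT_gaussian hfac hanti hsq (by simp) hB1 hB2
      (PhiT.coeff₁_mem ha) (PhiT.coeff₂_mem ha) (Submodule.smul_mem _ _ (ha _)) (ha _),
    gw_eq_neg_coeff₂_mul_coeff₁_mul (fun S T => hanti (.inl S) (.inl T)) (fun S => hsq (.inl S))
      h34]

/-- Gaussian integral representation of the deformed weight `g₁₂₃₄`:
with `Γ₁₂₃₄ = Φ₁₂₃₄ + λ ζ₁₃ ζ₁₄ ζ₂₃ ζ₂₄ ζ₃₄ a₁₃₄ a₂₃₄`, one has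
`∬ exp(Γ₁₂₃₄) db⁽¹⁾ db⁽²⁾ = g₁₂₃₄ = f₁₂₃₄ + λ (∏_{i<j} ζ_{ij}) a₁₂₃ a₁₂₄ a₁₃₄ a₂₃₄`.
Here `exp(Γ₁₂₃₄)` terminates: `Γ₁₂₃₄ ^ 4 = 0`; for its Taylor series the factorials
`n!`, `n < 4`, must be invertible in `F`. -/
theorem gaussian_g
    {F : Type*} [Field F] {Λ : Type*} [Ring Λ] [Algebra F Λ]
    (hchar : (2 : F) ≠ 0)
    (ζ : Fin 5 → F)
    (hfac : ∀ n < 4, (n.factorial : F) ≠ 0)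
    (h34 : ζ 2 ≠ ζ 3) (lam : F)
    (e : Finset (Fin 5) ⊕ Fin 2 → Λ)
    (hanti : ∀ i j, e i * e j = -(e j * e i))
    (hsq : ∀ i, e i * e i = 0)
    (B1 B2 : Λ →ₗ[F] Λ)
    (hB1 : IsBerezin F e (Sum.inr 0) B1)
    (hB2 : IsBerezin F e (Sum.inr 1) B2) :
    B2 (B1 (expT F 4
        (PhiT ζ e 0 1 0 1 2 3 +
          (lam * ((ζ 0 - ζ 2) * (ζ 0 - ζ 3) * (ζ 1 - ζ 2) * (ζ 1 - ζ 3) * (ζ 2 - ζ 3))) •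
            (e (Sum.inl {0, 2, 3}) * e (Sum.inl {1, 2, 3}))))) =
      gw ζ (fun S => e (Sum.inl S)) lam 1 0 1 2 3 :=
  gaussian_g_general ζ hfac h34 lam e hanti hsq B1 B2 hB1 hB2
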